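/- Let n ≥ 1, let D be an n-dimensional grid (product of n nontrivial finite chains), and let L be a finite distributive lattice of order dimension at most n containing D as a sublattice. Then there is a retraction L → D, i.e., a lattice homomorphism fixing D pointwise. -/

import Mathlib

/-- The order dimension of a poset: the least `n` such that it order-embeds into a
product of `n` chains. -/
noncomputable def orderDim (P : Type) [Preorder P] : ℕ :=
  sInf {n : ℕ | Nonempty (P ↪o (Fin n → ℕ))}

/-!
An order embedding `L ↪o (Fin n → ℕ)` separates the points of an antichain of sup-prime
elements in pairwise distinct coordinates (a sup-prime `p` is not below the largest element
not above it), so such antichains have at most `n` elements and, by Dilworth's theorem, the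
sup-primes of `L` are covered by a family `C` of at most `n` chains. Counting the points of a
chain below `x` is a lattice homomorphism `L → ℕ`, and together these counts embed `L` into
`C → ℕ` as a lattice.

The grid `D = ∏ i, α i` thus order-embeds into `C → ℕ` with `|C| ≤ n`. For `i ≠ i'` every
element `update ⊥ i b` lies below every `update ⊤ i' a`, so a coordinate of `C → ℕ` that
distinguishes two points of the `i`-th axis distinguishes no other axis; since each axis needs
one, `i ↦ σ i` is a bijection and `d i` can be read off from coordinate `σ i` of the image of
`d` alone. Reading it off is monotone on a chain, hence a lattice homomorphism, and composed
with the embedding of `L` it gives the retraction.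
-/

open Finset Function

lemma nonempty_orderEmbedding_fin_orderDim (P : Type) [PartialOrder P] [Finite P] :
    Nonempty (P ↪o (Fin (orderDim P) → ℕ)) := by
  classical
  refine Nat.sInf_mem (s := {n : ℕ | Nonempty (P ↪o (Fin n → ℕ))}) ⟨Nat.card P,
    ⟨OrderEmbedding.ofMapLEIff
    (fun x j => if (Finite.equivFin P).symm j ≤ x then 1 else 0) fun x y => ⟨fun h => ?_, ?_⟩⟩⟩
  · by_contra hxy
    simpa [hxy] using h (Finite.equivFin P x)
  · intro hxy j
    by_cases h : (Finite.equivFin P).symm j ≤ x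
    · simp [h, h.trans hxy]
    · simp [h]

lemma SupPrime.exists_forall_le_iff_not_le {L : Type*} [Lattice L] [Finite L] {p : L}
    (hp : SupPrime p) : ∃ m, ∀ x, x ≤ m ↔ ¬ p ≤ x := by
  classical
  have := Fintype.ofFinite L
  have : Nonempty L := ⟨p⟩
  let := Fintype.toOrderBot L
  refine ⟨(univ.filter (¬ p ≤ ·)).sup id, fun x => ⟨fun hx hpx => ?_, fun hx => ?_⟩⟩
  · obtain ⟨y, hy, hpy⟩ := hp.le_finset_sup.1 (hpx.trans hx)
    exact (mem_filter.1 hy).2 hpy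
  · exact Finset.le_sup (f := id) (mem_filter.2 ⟨mem_univ x, hx⟩)

lemma card_le_of_isAntichain_supPrime {L κ β : Type*} [Lattice L] [Finite L] [Finite κ]
    [LinearOrder β] (g : L ↪o (κ → β)) {t : Finset L} (ht : ∀ p ∈ t, SupPrime p)
    (hanti : IsAntichain (· ≤ ·) (t : Set L)) : #t ≤ Nat.card κ := by
  choose! m hm using fun p (hp : p ∈ t) => (ht p hp).exists_forall_le_iff_not_le
  have hsep : ∀ p ∈ t, ∃ j, g (m p) j < g p j := by
    intro p hp
    have : ¬ g p ≤ g (m p) := fun h => (hm p hp (m p)).1 le_rfl (g.le_iff_le.1 h)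
    rw [Pi.le_def] at this
    push Not at this
    exact this
  choose w hw using fun p : t => hsep p p.2
  have hw_lt : ∀ p q : t, p ≠ q → g q (w p) < g p (w p) := fun p q hpq =>
    (g.monotone ((hm p p.2 q).2 (hanti p.2 q.2 (Subtype.coe_ne_coe.2 hpq)))
      (w p)).trans_lt (hw p)
  have hinj : Injective w := fun p q hpq => by
    by_contra hne
    exact lt_asymm (hw_lt p q hne) (hpq ▸ hw_lt q p (Ne.symm hne))
  simpa using Nat.card_le_card_of_injective w hinj

section Dilworth

variable {α : Type*} [PartialOrder α]

structure IsChainPartition (s : Finset α) (C : Finset (Finset α)) : Prop where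
  isChain : ∀ c ∈ C, IsChain (· ≤ ·) (c : Set α)
  subset : ∀ c ∈ C, c ⊆ s
  cover : ∀ x ∈ s, ∃ c ∈ C, x ∈ c
  pairwiseDisjoint : (C : Set (Finset α)).PairwiseDisjoint id

namespace IsChainPartition

variable {s t K : Finset α} {C : Finset (Finset α)}

lemma insert_of_sdiff [DecidableEq α] (h : IsChainPartition (s \ K) C)
    (hK : IsChain (· ≤ ·) (K : Set α)) (hKs : K ⊆ s) : IsChainPartition s (insert K C) where
  isChain := by
    simp only [mem_insert, forall_eq_or_imp]
    exact ⟨hK, h.isChain⟩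
  subset := by
    simp only [mem_insert, forall_eq_or_imp]
    exact ⟨hKs, fun c hc => (h.subset c hc).trans sdiff_subset⟩
  cover x hx := by
    by_cases hxK : x ∈ K
    · exact ⟨K, mem_insert_self _ _, hxK⟩
    · obtain ⟨c, hc, hxc⟩ := h.cover x (mem_sdiff.2 ⟨hx, hxK⟩)
      exact ⟨c, mem_insert_of_mem hc, hxc⟩
  pairwiseDisjoint := by
    rw [coe_insert]
    refine h.pairwiseDisjoint.insert fun c hc _ => disjoint_left.2 fun x hxK hxc => ?_
    exact (mem_sdiff.1 (h.subset c hc hxc)).2 hxK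

lemma insert_singleton [DecidableEq α] {a : α} (h : IsChainPartition s C) (ha : a ∉ s) :
    IsChainPartition (insert a s) (insert {a} C) :=
  insert_of_sdiff (by rwa [insert_sdiff_of_mem _ (mem_singleton_self a), sdiff_singleton_eq_erase,
    erase_eq_of_notMem ha]) (by simp) (by simp)

lemma exists_injOn (h : IsChainPartition s C) (hts : t ⊆ s)
    (ht : IsAntichain (· ≤ ·) (t : Set α)) :
    ∃ f : α → Finset α, (∀ x ∈ t, f x ∈ C ∧ x ∈ f x) ∧ Set.InjOn f t := by
  choose! f hfC hxf using fun x (hx : x ∈ t) => h.cover x (hts hx)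
  refine ⟨f, fun x hx => ⟨hfC x hx, hxf x hx⟩, fun x hx y hy hxy => ?_⟩
  have hc := h.isChain _ (hfC x hx)
  exact inter_subsingleton_of_isChain_of_isAntichain hc ht ⟨hxf x hx, hx⟩ ⟨hxy ▸ hxf y hy, hy⟩

lemma card_le (h : IsChainPartition s C) (hts : t ⊆ s) (ht : IsAntichain (· ≤ ·) (t : Set α)) :
    #t ≤ #C := by
  obtain ⟨f, hf, hinj⟩ := h.exists_injOn hts ht
  exact card_le_card_of_injOn f (fun x hx => (hf x hx).1) hinj

lemma exists_mem_of_card_eq (h : IsChainPartition s C) (hts : t ⊆ s)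
    (ht : IsAntichain (· ≤ ·) (t : Set α)) (hcard : #t = #C) {c : Finset α} (hc : c ∈ C) :
    ∃ x ∈ t, x ∈ c := by
  obtain ⟨f, hf, hinj⟩ := h.exists_injOn hts ht
  obtain ⟨x, hx, rfl⟩ :=
    surjOn_of_injOn_of_card_le f (fun x hx => (hf x hx).1) hinj hcard.ge hc
  exact ⟨x, hx, (hf x hx).2⟩

variable (s) in
def MemAntichainOfCard (k : ℕ) (x : α) : Prop :=
  ∃ t ⊆ s, IsAntichain (· ≤ ·) (t : Set α) ∧ #t = k ∧ x ∈ t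

lemma exists_greatest_memAntichainOfCard (h : IsChainPartition s C)
    (hmax : ∃ t ⊆ s, IsAntichain (· ≤ ·) (t : Set α) ∧ #t = #C) {c : Finset α} (hc : c ∈ C) :
    ∃ m ∈ c, MemAntichainOfCard s #C m ∧ ∀ x ∈ c, MemAntichainOfCard s #C x → x ≤ m := by
  classical
  obtain ⟨t, hts, ht, hcard⟩ := hmax
  obtain ⟨x, hxt, hxc⟩ := h.exists_mem_of_card_eq hts ht hcard hc
  obtain ⟨m, hm⟩ := exists_maximal (s := c.filter (MemAntichainOfCard s #C))
    ⟨x, mem_filter.2 ⟨hxc, t, hts, ht, hcard, hxt⟩⟩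
  obtain ⟨hmc, hmA⟩ := mem_filter.1 hm.prop
  refine ⟨m, hmc, hmA, fun y hyc hyA => ?_⟩
  rcases (h.isChain c hc).total hyc hmc with hym | hmy
  · exact hym
  · exact hm.le_of_ge (mem_filter.2 ⟨hyc, hyA⟩) hmy

lemma card_lt_of_subset_sdiff [DecidableEq α] [DecidableLE α] (h : IsChainPartition s C)
    {c : Finset α} (hc : c ∈ C) {m : α} (hm : ∀ x ∈ c, MemAntichainOfCard s #C x → x ≤ m)
    (hts : t ⊆ s \ c.filter (· ≤ m)) (ht : IsAntichain (· ≤ ·) (t : Set α)) : #t < #C := by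
  refine (h.card_le (hts.trans sdiff_subset) ht).lt_of_ne fun hcard => ?_
  obtain ⟨x, hxt, hxc⟩ := h.exists_mem_of_card_eq (hts.trans sdiff_subset) ht hcard hc
  have hxm : x ≤ m := hm x hxc ⟨t, hts.trans sdiff_subset, ht, hcard, hxt⟩
  exact (mem_sdiff.1 (hts hxt)).2 (mem_filter.2 ⟨hxc, hxm⟩)

lemma isAntichain_image_of_greatest [DecidableEq α] (h : IsChainPartition s C)
    {m : Finset α → α} (hmc : ∀ c ∈ C, m c ∈ c) (hmA : ∀ c ∈ C, MemAntichainOfCard s #C (m c))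
    (hmle : ∀ c ∈ C, ∀ x ∈ c, MemAntichainOfCard s #C x → x ≤ m c) :
    IsAntichain (· ≤ ·) (C.image m : Set α) ∧ #(C.image m) = #C := by
  constructor
  · simp only [coe_image]
    rintro _ ⟨c, hc, rfl⟩ _ ⟨c', hc', rfl⟩ hne hle
    obtain ⟨t, hts, ht, hcard, hmt⟩ := hmA c' hc'
    obtain ⟨z, hzt, hzc⟩ := h.exists_mem_of_card_eq hts ht hcard hc
    have hzm : z ≤ m c := hmle c hc z hzc ⟨t, hts, ht, hcard, hzt⟩
    have hz : z = m c' := ht.eq hzt hmt (hzm.trans hle)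
    exact hne (le_antisymm hle (hz ▸ hzm))
  · refine card_image_of_injOn fun c hc c' hc' hmm => ?_
    by_contra hne
    exact disjoint_left.1 (h.pairwiseDisjoint hc hc' hne) (hmc c hc) (hmm ▸ hmc c' hc')

end IsChainPartition

open IsChainPartition in
theorem exists_isChainPartition_card_le_card_isAntichain (s : Finset α) :
    ∃ (C : Finset (Finset α)) (t : Finset α),
      IsChainPartition s C ∧ t ⊆ s ∧ IsAntichain (· ≤ ·) (t : Set α) ∧ #C ≤ #t := by
  induction s using Finset.strongInduction with
  | _ s ih =>
  classical
  obtain rfl | hs := s.eq_empty_or_nonempty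
  · exact ⟨∅, ∅, ⟨by simp, by simp, by simp, by simp⟩, by simp⟩
  obtain ⟨a, ha⟩ := exists_maximal hs
  obtain ⟨C, t, hC, hts, ht, hCt⟩ := ih (s.erase a) (erase_ssubset ha.prop)
  have hcard : #t = #C := le_antisymm (hC.card_le hts ht) hCt
  have : Nonempty α := ⟨a⟩
  choose! m hmc hmA hmle using fun c (hc : c ∈ C) =>
    hC.exists_greatest_memAntichainOfCard ⟨t, hts, ht, hcard⟩ hc
  -- `m c` is the top of chain `c` among the points of maximum antichains of `s.erase a`. Either
  -- the chain `{x ∈ c | x ≤ m c} ∪ {a}` meets every maximum antichain and can be split off, or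
  -- the `m c` together with `a` form a larger antichain.
  by_cases hcase : ∃ c ∈ C, m c ≤ a
  · obtain ⟨c, hc, hca⟩ := hcase
    set K := insert a (c.filter (· ≤ m c))
    have hKs : K ⊆ s := insert_subset ha.prop
      ((filter_subset _ _).trans ((hC.subset c hc).trans (erase_subset a s)))
    have hK : IsChain (· ≤ ·) (K : Set α) := by
      rw [coe_insert]
      refine ((hC.isChain c hc).mono (coe_subset.2 (filter_subset _ c))).insert
        fun x hx _ => Or.inr ((mem_filter.1 hx).2.trans hca)
    obtain ⟨E, u, hE, hus, hu, hEu⟩ := ih (s \ K) (sdiff_ssubset hKs ⟨a, mem_insert_self _ _⟩)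
    have hsK : s \ K = s.erase a \ c.filter (· ≤ m c) := by
      rw [sdiff_insert, erase_sdiff_comm]
    have hu_lt : #u < #C := hC.card_lt_of_subset_sdiff hc (hmle c hc) (hsK ▸ hus) hu
    refine ⟨insert K E, t, hE.insert_of_sdiff hK hKs, hts.trans (erase_subset _ _), ht, ?_⟩
    calc #(insert K E) ≤ #E + 1 := card_insert_le _ _
      _ ≤ #t := by omega
  · push Not at hcase
    obtain ⟨hmA, hmcard⟩ := hC.isAntichain_image_of_greatest hmc hmA hmle
    have hmem : ∀ x ∈ C.image m, x ∈ s.erase a := by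
      simp only [mem_image, forall_exists_index, and_imp, forall_apply_eq_imp_iff₂]
      exact fun c hc => hC.subset c hc (hmc c hc)
    have haC : a ∉ C.image m := fun h => notMem_erase a s (hmem a h)
    refine ⟨insert {a} C, insert a (C.image m), ?_, ?_, ?_, ?_⟩
    · rw [← insert_erase ha.prop]
      exact hC.insert_singleton (notMem_erase a s)
    · exact insert_subset ha.prop fun x hx => erase_subset a s (hmem x hx)
    · rw [coe_insert]
      refine hmA.insert (fun x hx _ => ?_) (fun x hx hax hxa => ?_)
      · obtain ⟨c, hc, rfl⟩ := mem_image.1 (mem_coe.1 hx)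
        exact hcase c hc
      · exact hax (le_antisymm hxa (ha.le_of_ge (erase_subset a s (hmem x hx)) hxa))
    · rw [card_insert_of_notMem haC, hmcard]
      exact card_insert_le _ _

namespace LatticeHom

variable {α ι : Type*} {β : ι → Type*} [Lattice α] [∀ i, Lattice (β i)]

def pi (f : ∀ i, LatticeHom α (β i)) : LatticeHom α (∀ i, β i) where
  toFun x i := f i x
  map_sup' x y := funext fun i => map_sup (f i) x y
  map_inf' x y := funext fun i => map_inf (f i) x y

end LatticeHom

section ChainCount

variable {L : Type*}

lemma IsChain.filter_le_subset_or_subset [Preorder L] [DecidableLE L] {c : Finset L}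
    (hc : IsChain (· ≤ ·) (c : Set L)) (x y : L) :
    {p ∈ c | p ≤ x} ⊆ {p ∈ c | p ≤ y} ∨ {p ∈ c | p ≤ y} ⊆ {p ∈ c | p ≤ x} := by
  rw [or_iff_not_imp_left, not_subset]
  rintro ⟨p, hp, hpy⟩ q hq
  simp only [mem_filter] at hp hpy hq ⊢
  refine ⟨hq.1, ?_⟩
  rcases hc.total hp.1 hq.1 with hpq | hqp
  · exact absurd ⟨hp.1, hpq.trans hq.2⟩ hpy
  · exact hqp.trans hp.2

open scoped Classical in
noncomputable def chainCount [Lattice L] (c : Finset L) (hc : IsChain (· ≤ ·) (c : Set L))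
    (hp : ∀ p ∈ c, SupPrime p) : LatticeHom L ℕ where
  toFun x := #{p ∈ c | p ≤ x}
  map_sup' x y := by
    have : {p ∈ c | p ≤ x ⊔ y} = {p ∈ c | p ≤ x} ∪ {p ∈ c | p ≤ y} := by
      ext p
      simp only [mem_filter, mem_union]
      constructor
      · rintro ⟨hpc, hpxy⟩
        exact ((hp p hpc).le_sup.1 hpxy).imp (⟨hpc, ·⟩) (⟨hpc, ·⟩)
      · rintro (⟨hpc, h⟩ | ⟨hpc, h⟩)
        · exact ⟨hpc, le_sup_of_le_left h⟩
        · exact ⟨hpc, le_sup_of_le_right h⟩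
    rw [this]
    rcases hc.filter_le_subset_or_subset x y with h | h
    · rw [union_eq_right.2 h, sup_eq_right.2 (card_le_card h)]
    · rw [union_eq_left.2 h, sup_eq_left.2 (card_le_card h)]
  map_inf' x y := by
    have : {p ∈ c | p ≤ x ⊓ y} = {p ∈ c | p ≤ x} ∩ {p ∈ c | p ≤ y} := by
      ext p
      simp only [mem_filter, mem_inter, le_inf_iff]
      tauto
    rw [this]
    rcases hc.filter_le_subset_or_subset x y with h | h
    · rw [inter_eq_left.2 h, inf_eq_left.2 (card_le_card h)]
    · rw [inter_eq_right.2 h, inf_eq_right.2 (card_le_card h)]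

open scoped Classical in
lemma chainCount_apply [Lattice L] (c : Finset L) (hc : IsChain (· ≤ ·) (c : Set L))
    (hp : ∀ p ∈ c, SupPrime p) (x : L) : chainCount c hc hp x = #{p ∈ c | p ≤ x} := rfl

lemma le_of_forall_supPrime_le [DistribLattice L] [Finite L] {x y : L}
    (h : ∀ p, SupPrime p → p ≤ x → p ≤ y) : x ≤ y := by
  have := Fintype.ofFinite L
  have : Nonempty L := ⟨x⟩
  let := Fintype.toOrderBot L
  obtain ⟨s, rfl, hs⟩ := exists_supIrred_decomposition x
  exact Finset.sup_le fun p hp => h p (hs hp).supPrime (Finset.le_sup (f := id) hp)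

open scoped Classical in
lemma filter_le_eq_of_chainCount_eq [Lattice L] {c : Finset L} {hc : IsChain (· ≤ ·) (c : Set L)}
    {hp : ∀ p ∈ c, SupPrime p} {x y : L} (h : chainCount c hc hp x = chainCount c hc hp y) :
    {p ∈ c | p ≤ x} = {p ∈ c | p ≤ y} := by
  rw [chainCount_apply, chainCount_apply] at h
  rcases hc.filter_le_subset_or_subset x y with hxy | hyx
  · exact eq_of_subset_of_card_le hxy h.ge
  · exact (eq_of_subset_of_card_le hyx h.le).symm

lemma injective_pi_chainCount [DistribLattice L] [Finite L] {C : Finset (Finset L)}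
    (hC : ∀ c ∈ C, IsChain (· ≤ ·) (c : Set L)) (hp : ∀ c ∈ C, ∀ p ∈ c, SupPrime p)
    (hcover : ∀ p, SupPrime p → ∃ c ∈ C, p ∈ c) :
    Injective (LatticeHom.pi fun c : C => chainCount c.1 (hC c c.2) (hp c c.2)) := by
  classical
  intro x y hxy
  have hiff : ∀ p, SupPrime p → (p ≤ x ↔ p ≤ y) := fun p hp' => by
    obtain ⟨c, hc, hpc⟩ := hcover p hp'
    have hcount : chainCount c (hC c hc) (hp c hc) x = chainCount c (hC c hc) (hp c hc) y :=
      congrFun hxy ⟨c, hc⟩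
    simpa [hpc] using congrArg (p ∈ ·) (filter_le_eq_of_chainCount_eq hcount)
  exact le_antisymm (le_of_forall_supPrime_le fun p hp => (hiff p hp).1)
    (le_of_forall_supPrime_le fun p hp => (hiff p hp).2)

end ChainCount

section Retraction

variable {ι κ β : Type*} {α : ι → Type*} [∀ i, LinearOrder (α i)] [∀ i, BoundedOrder (α i)]
  [LinearOrder β] [DecidableEq ι]

lemma update_bot_le_update_top {i j : ι} (hij : i ≠ j) (a : α i) (b : α j) :
    update (⊥ : ∀ i, α i) i a ≤ update ⊤ j b := by
  intro l
  rcases eq_or_ne l i with rfl | hli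
  · simp [update_of_ne hij]
  · simp [update_of_ne hli]

lemma update_bot_le_update_top_iff {i : ι} {a b : α i} :
    update (⊥ : ∀ i, α i) i a ≤ update ⊤ i b ↔ a ≤ b := by
  simp [update_le_iff]

variable (H : (∀ i, α i) ↪o (κ → β))

def SeparatesAt (i : ι) (j : κ) : Prop :=
  ∃ a b : α i, H (update ⊤ i a) j < H (update ⊥ i b) j

lemma separatesAt_of_lt {i : ι} {a b : α i} (hab : a < b) :
    ∃ j, H (update ⊤ i a) j < H (update ⊥ i b) j := by
  have : ¬ H (update ⊥ i b) ≤ H (update ⊤ i a) := by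
    rw [H.le_iff_le, update_bot_le_update_top_iff]
    exact hab.not_ge
  rw [Pi.le_def] at this
  push Not at this
  exact this

lemma SeparatesAt.eq {i i' : ι} {j : κ} (h : SeparatesAt H i j) (h' : SeparatesAt H i' j) :
    i = i' := by
  obtain ⟨a, b, hab⟩ := h
  obtain ⟨a', b', hab'⟩ := h'
  by_contra hne
  have h₁ := H.monotone (update_bot_le_update_top hne b a') j
  have h₂ := H.monotone (update_bot_le_update_top (Ne.symm hne) b' a) j
  exact lt_irrefl _ (((hab.trans_le h₁).trans hab').trans_le h₂)

lemma exists_forall_separatesAt_imp_eq [∀ i, Nontrivial (α i)] [Finite κ]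
    (hcard : Nat.card κ ≤ Nat.card ι) :
    ∃ σ : ι → κ, ∀ i j, SeparatesAt H i j → j = σ i := by
  have hex : ∀ i, ∃ j, SeparatesAt H i j := fun i => by
    obtain ⟨a, b, hab⟩ := exists_pair_lt (α i)
    obtain ⟨j, hj⟩ := separatesAt_of_lt H hab
    exact ⟨j, a, b, hj⟩
  choose σ hσ using hex
  have hσ_inj : Injective σ := fun i i' h => (hσ i).eq H (h ▸ hσ i')
  have hσ_surj : Surjective σ := (hσ_inj.bijective_of_nat_card_le hcard).2
  refine ⟨σ, fun i j hij => ?_⟩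
  obtain ⟨i', rfl⟩ := hσ_surj j
  rw [hij.eq H (hσ i')]

lemma le_apply_iff_of_separatesAt {σ : ι → κ} (hσ : ∀ i j, SeparatesAt H i j → j = σ i) (i : ι)
    (a : α i) (d : ∀ i, α i) : H (update ⊥ i a) (σ i) ≤ H d (σ i) ↔ a ≤ d i := by
  refine ⟨fun h => not_lt.1 fun hlt => ?_,
    fun h => H.monotone (update_le_iff.2 ⟨h, fun _ _ => bot_le⟩) (σ i)⟩
  obtain ⟨j, hj⟩ := separatesAt_of_lt H hlt
  obtain rfl := hσ i j ⟨_, _, hj⟩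
  have hd : H d (σ i) ≤ H (update ⊤ i (d i)) (σ i) :=
    H.monotone (le_update_iff.2 ⟨le_rfl, fun _ _ => le_top⟩) (σ i)
  exact (h.trans hd).not_gt hj

end Retraction

theorem exists_latticeHom_retraction {ι κ β : Type*} {α : ι → Type*} [∀ i, LinearOrder (α i)]
    [∀ i, BoundedOrder (α i)] [∀ i, Finite (α i)] [∀ i, Nontrivial (α i)] [LinearOrder β]
    [Finite κ] (H : (∀ i, α i) ↪o (κ → β)) (hcard : Nat.card κ ≤ Nat.card ι) :
    ∃ r : LatticeHom (κ → β) (∀ i, α i), ∀ d, r (H d) = d := by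
  classical
  have (i : ι) : Fintype (α i) := Fintype.ofFinite (α i)
  obtain ⟨σ, hσ⟩ := exists_forall_separatesAt_imp_eq H hcard
  let θ (i : ι) : β →o α i :=
    ⟨fun m => ({a | H (update ⊥ i a) (σ i) ≤ m} : Finset (α i)).sup id,
      fun _ _ hm => sup_mono fun a ha => mem_filter.2 ⟨mem_univ a, (mem_filter.1 ha).2.trans hm⟩⟩
  refine ⟨LatticeHom.pi fun i => (θ i : LatticeHom β (α i)).comp (Pi.evalLatticeHom (σ i)),
    fun d => funext fun i => ?_⟩
  show ({a | H (update ⊥ i a) (σ i) ≤ H d (σ i)} : Finset (α i)).sup id = d i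
  simp only [le_apply_iff_of_separatesAt H hσ]
  exact le_antisymm (Finset.sup_le fun a ha => (mem_filter.1 ha).2)
    (Finset.le_sup (f := id) (mem_filter.2 ⟨mem_univ _, le_rfl⟩))

theorem statement16_general (n : ℕ) (k : Fin n → ℕ)
    (L : Type) [DistribLattice L] [Fintype L] (hdim : orderDim L ≤ n)
    (ι : LatticeHom (∀ i, Fin (k i + 2)) L) (hι : Function.Injective ι) :
    ∃ f : LatticeHom L (∀ i, Fin (k i + 2)), ∀ d, f (ι d) = d := by
  classical
  obtain ⟨g⟩ := nonempty_orderEmbedding_fin_orderDim L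
  obtain ⟨C, t, hC, hts, ht, hCt⟩ :=
    exists_isChainPartition_card_le_card_isAntichain ({p | SupPrime p} : Finset L)
  have hprime : ∀ c ∈ C, ∀ p ∈ c, SupPrime p := fun c hc p hp =>
    (mem_filter.1 (hC.subset c hc hp)).2
  have hcover : ∀ p, SupPrime p → ∃ c ∈ C, p ∈ c := fun p hp =>
    hC.cover p (mem_filter.2 ⟨mem_univ p, hp⟩)
  let G := LatticeHom.pi fun c : C => chainCount c.1 (hC.isChain c c.2) (hprime c c.2)
  have hG : Injective G := injective_pi_chainCount _ _ hcover
  have hcard : Nat.card C ≤ Nat.card (Fin n) := calc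
    Nat.card C = #C := by simp
    _ ≤ #t := hCt
    _ ≤ orderDim L := by
      simpa using card_le_of_isAntichain_supPrime g (fun p hp => (mem_filter.1 (hts hp)).2) ht
    _ ≤ n := hdim
    _ = Nat.card (Fin n) := by simp
  obtain ⟨r, hr⟩ :=
    exists_latticeHom_retraction (orderEmbeddingOfInjective (G.comp ι) (hG.comp hι)) hcard
  exact ⟨r.comp G, hr⟩

/-- Let `n ≥ 1`, let `D` be an `n`-dimensional grid (a product of `n`
nontrivial finite chains) and let `L` be a finite distributive lattice of order
dimension at most `n` containing `D` as a sublattice. Then there is a retraction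
`L → D`, i.e., a lattice homomorphism fixing `D` pointwise. -/
theorem statement16 (n : ℕ) (hn : 1 ≤ n) (k : Fin n → ℕ)
    (L : Type) [DistribLattice L] [Fintype L] (hdim : orderDim L ≤ n)
    (ι : LatticeHom (∀ i, Fin (k i + 2)) L) (hι : Function.Injective ι) :
    ∃ f : LatticeHom L (∀ i, Fin (k i + 2)), ∀ d, f (ι d) = d :=
  statement16_general n k L hdim ι hι
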